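/- If K is an important X–Y separator of G, then the graph Pr(G,X,Y,K) is X–Y normalized. -/

import Mathlib

variable {V : Type*}

/-- `K` is an `X`–`Y` separator of `G`: `K` avoids `X ∪ Y` and every walk
from a vertex of `X` to a vertex of `Y` meets `K` (i.e. there is no
`X`–`Y` path in `G \ K`). -/
def IsSeparator (G : SimpleGraph V) (X Y K : Set V) : Prop :=
  K ⊆ (X ∪ Y)ᶜ ∧
  ∀ x ∈ X, ∀ y ∈ Y, ∀ w : G.Walk x y, ∃ v ∈ w.support, v ∈ K

/-- `NR G A B`: the vertices of `G \ B` that are not reachable from `A` in `G \ B`. -/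
def NR (G : SimpleGraph V) (A B : Set V) : Set V :=
  {v | v ∉ B ∧ ¬ ∃ a ∈ A, ∃ w : G.Walk a v, ∀ x ∈ w.support, x ∉ B}

/-- `Reach G A B`: the vertices reachable from `A` in `G \ B`. -/
def Reach (G : SimpleGraph V) (A B : Set V) : Set V :=
  {v | ∃ a ∈ A, ∃ w : G.Walk a v, ∀ x ∈ w.support, x ∉ B}

/-- The order on `X`–`Y` separators: `K1 ≤ K2` iff `NR(G,Y,K1) ⊆ NR(G,Y,K2)`. -/
def SepLE (G : SimpleGraph V) (Y K1 K2 : Set V) : Prop :=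
  NR G Y K1 ⊆ NR G Y K2

/-- The strict order on `X`–`Y` separators. -/
def SepLT (G : SimpleGraph V) (Y K1 K2 : Set V) : Prop :=
  NR G Y K1 ⊆ NR G Y K2 ∧ NR G Y K1 ≠ NR G Y K2

/-- A minimal `X`–`Y` separator: no proper subset is an `X`–`Y` separator. -/
def IsMinimalSeparator (G : SimpleGraph V) (X Y K : Set V) : Prop :=
  IsSeparator G X Y K ∧ ∀ K' ⊂ K, ¬ IsSeparator G X Y K'

/-- An important `X`–`Y` separator: a minimal separator `K` such that there is
no separator `K'` with `K < K'` and `|K'| ≤ |K|`. -/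
def IsImportantSeparator (G : SimpleGraph V) (X Y K : Set V) : Prop :=
  IsMinimalSeparator G X Y K ∧
  ¬ ∃ K', IsSeparator G X Y K' ∧ SepLT G Y K K' ∧ K'.ncard ≤ K.ncard

/-- The minimum size of an `X`–`Y` separator of `G`. -/
noncomputable def minSepSize (G : SimpleGraph V) (X Y : Set V) : ℕ :=
  sInf {n | ∃ K, IsSeparator G X Y K ∧ K.ncard = n}

/-- The excess of a separator: its size minus the minimum separator size. -/
noncomputable def excess (G : SimpleGraph V) (X Y K : Set V) : ℕ :=
  K.ncard - minSepSize G X Y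

/-- The graph `Pr(G,X,Y,K)`: the vertices `NR(G,Y,K) \ X` are deleted (here:
made isolated), and every vertex of `X` is made adjacent to every vertex of `K`. -/
def PrGraph (G : SimpleGraph V) (X Y K : Set V) : SimpleGraph V where
  Adj u v := u ≠ v ∧ u ∉ NR G Y K \ X ∧ v ∉ NR G Y K \ X ∧
    (G.Adj u v ∨ (u ∈ X ∧ v ∈ K) ∨ (u ∈ K ∧ v ∈ X))
  symm := by
    constructor
    rintro u v ⟨h1, h2, h3, h4⟩
    refine ⟨h1.symm, h3, h2, ?_⟩
    rcases h4 with h | h | h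
    · exact Or.inl h.symm
    · exact Or.inr (Or.inr ⟨h.2, h.1⟩)
    · exact Or.inr (Or.inl ⟨h.2, h.1⟩)
  loopless := by constructor; rintro v ⟨h1, -⟩; exact h1 rfl

/-- `NSet G X` is `N(X)`: the set of vertices outside `X` adjacent to a vertex of `X`. -/
def NSet (G : SimpleGraph V) (X : Set V) : Set V :=
  {v | v ∉ X ∧ ∃ x ∈ X, G.Adj x v}

/-- `G` is `X`–`Y` normalized: `N(X)` is an `X`–`Y` separator and is
the unique smallest `X`–`Y` separator. -/
def Normalized (G : SimpleGraph V) (X Y : Set V) : Prop :=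
  IsSeparator G X Y (NSet G X) ∧
  ∀ K, IsSeparator G X Y K → K ≠ NSet G X → (NSet G X).ncard < K.ncard

/-- The cover excess `CE(S)`: the minimum excess of an `X`–`Y` separator disjoint from `S`. -/
noncomputable def CE (G : SimpleGraph V) (X Y S : Set V) : ℕ :=
  sInf {n | ∃ K, IsSeparator G X Y K ∧ Disjoint K S ∧ excess G X Y K = n}

/-- A witness of `S`: an `X`–`Y` separator disjoint from `S` whose excess equals `CE(S)`. -/
noncomputable def IsWitness (G : SimpleGraph V) (X Y S K : Set V) : Prop :=
  IsSeparator G X Y K ∧ Disjoint K S ∧ excess G X Y K = CE G X Y S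

/-- An important witness of `S`: a witness of `S` that is an important `X`–`Y` separator. -/
noncomputable def IsImportantWitness (G : SimpleGraph V) (X Y S K : Set V) : Prop :=
  IsWitness G X Y S K ∧ IsImportantSeparator G X Y K

/-!
In `H = Pr(G,X,Y,K)` the neighbourhood of `X` is exactly `K`, and an `H`-walk avoiding `K` is a
`G`-walk. Let `K'` be an `X`–`Y` separator of `H` with `|K'| ≤ |K|`. Growing the region reachable
from `Y` in `G \ K'` one edge at a time, it never enters `K`: a first vertex of `K` on it would
lead, via the new `X`–`K` edges of `H`, to an `H`-walk from `Y` to `X` avoiding `K'`. Hence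
`K'' = K' \ NR(G,Y,K)` is an `X`–`Y` separator of `G` with `K ≤ K''` and `|K''| ≤ |K|`, so by
importance `NR(G,Y,K'') = NR(G,Y,K)`; this forces `K ⊆ K'' ⊆ K'`, i.e. `K' = K`.
-/

open SimpleGraph

section Reach

variable {G : SimpleGraph V} {A B S X Y K K' : Set V}

lemma notMem_of_mem_reach {v : V} (hv : v ∈ Reach G A B) : v ∉ B := by
  obtain ⟨_, _, w, hw⟩ := hv
  exact hw v w.end_mem_support

lemma mem_reach_self {a : V} (ha : a ∈ A) (haB : a ∉ B) : a ∈ Reach G A B :=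
  ⟨a, ha, Walk.nil, by simpa using haB⟩

lemma mem_reach_of_adj {u v : V} (hu : u ∈ Reach G A B) (huv : G.Adj u v) (hv : v ∉ B) :
    v ∈ Reach G A B := by
  obtain ⟨a, ha, w, hw⟩ := hu
  refine ⟨a, ha, w.concat huv, fun x hx => ?_⟩
  rw [Walk.support_concat, List.mem_append, List.mem_singleton] at hx
  rcases hx with hx | rfl
  exacts [hw x hx, hv]

lemma reach_subset_of_closed (hA : ∀ a ∈ A, a ∉ B → a ∈ S)
    (hS : ∀ u v, u ∈ S → G.Adj u v → v ∉ B → v ∈ S) : Reach G A B ⊆ S := by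
  suffices ∀ {u v : V} (w : G.Walk u v), u ∈ S → (∀ x ∈ w.support, x ∉ B) → v ∈ S by
    rintro v ⟨a, ha, w, hw⟩
    exact this w (hA a ha (hw a w.start_mem_support)) hw
  intro u v w
  induction w with
  | nil => exact fun hu _ => hu
  | cons huv w ih =>
    intro hu hw
    exact ih (hS _ _ hu huv (hw _ (by simp))) fun x hx => hw x (by simp [hx])

lemma isSeparator_iff : IsSeparator G X Y K ↔ K ⊆ (X ∪ Y)ᶜ ∧ Disjoint X (Reach G Y K) := by
  refine and_congr_right fun _ => ⟨fun h => Set.disjoint_left.2 ?_, fun h x hx y hy w => ?_⟩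
  · rintro x hx ⟨y, hy, w, hw⟩
    obtain ⟨v, hv, hvK⟩ := h x hx y hy w.reverse
    exact hw v (by simpa using hv) hvK
  · by_contra! hw
    exact Set.disjoint_left.1 h hx ⟨y, hy, w.reverse, by simpa using hw⟩

lemma IsSeparator.disjoint_reach (hK : IsSeparator G X Y K) : Disjoint X (Reach G Y K) :=
  (isSeparator_iff.1 hK).2

lemma IsMinimalSeparator.nonempty_of_mem (hK : IsMinimalSeparator G X Y K) {k : V}
    (hk : k ∈ K) : X.Nonempty := by
  rw [Set.nonempty_iff_ne_empty]
  rintro rfl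
  exact hK.2 ∅ (Set.empty_ssubset.2 ⟨k, hk⟩) ⟨Set.empty_subset _, by simp⟩

lemma notMem_NR_of_mem_reach {v : V} (hv : v ∈ Reach G Y K) : v ∉ NR G Y K :=
  fun hN => hN.2 hv

lemma sepLE_of_reach_subset (hdisj : Disjoint K' (NR G Y K)) (h : Reach G Y K' ⊆ Reach G Y K) :
    SepLE G Y K K' :=
  fun _ hv => ⟨Set.disjoint_right.1 hdisj hv, fun hv' => hv.2 (h hv')⟩

lemma subset_of_NR_eq_of_reach_subset (heq : NR G Y K = NR G Y K')
    (h : Reach G Y K' ⊆ Reach G Y K) : K ⊆ K' := by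
  intro k hk
  by_contra hk'
  have hkN : k ∉ NR G Y K' := heq ▸ fun hN => hN.1 hk
  have hkR : k ∈ Reach G Y K' := by_contra fun hr => hkN ⟨hk', hr⟩
  exact notMem_of_mem_reach (h hkR) hk

end Reach

lemma SimpleGraph.Walk.notMem_of_isolated {G : SimpleGraph V} {D : Set V}
    (hD : ∀ u v, G.Adj u v → u ∉ D) {u v : V} (w : G.Walk u v) (hu : u ∉ D) :
    ∀ z ∈ w.support, z ∉ D := by
  induction w with
  | nil => simpa using hu
  | cons huv w ih =>
    simp only [Walk.support_cons, List.mem_cons, forall_eq_or_imp]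
    exact ⟨hu, ih (hD _ _ huv.symm)⟩

namespace PrGraph

variable {G : SimpleGraph V} {X Y K K' : Set V}

lemma adj_of_adj {u v : V} (huv : G.Adj u v) (hu : u ∉ NR G Y K \ X) (hv : v ∉ NR G Y K \ X) :
    (PrGraph G X Y K).Adj u v :=
  ⟨huv.ne, hu, hv, Or.inl huv⟩

lemma adj_of_mem_of_mem {x k : V} (hx : x ∈ X) (hk : k ∈ K) (hkX : k ∉ X) :
    (PrGraph G X Y K).Adj x k :=
  ⟨fun h => hkX (h ▸ hx), fun h => h.2 hx, fun h => h.1.1 hk, Or.inr (Or.inl ⟨hx, hk⟩)⟩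

lemma notMem_diff_of_mem_reach {v : V} (hv : v ∈ Reach G Y K) : v ∉ NR G Y K \ X :=
  fun hD => notMem_NR_of_mem_reach hv hD.1

lemma reach_subset : Reach (PrGraph G X Y K) Y K ⊆ Reach G Y K :=
  reach_subset_of_closed (fun _ hy hyK => mem_reach_self hy hyK) fun _ _ hu huv hv => by
    rcases huv.2.2.2 with h | h | h
    · exact mem_reach_of_adj hu h hv
    · exact absurd h.2 hv
    · exact absurd h.1 (notMem_of_mem_reach hu)

lemma isSeparator (hK : IsSeparator G X Y K) : IsSeparator (PrGraph G X Y K) X Y K :=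
  isSeparator_iff.2 ⟨hK.1, hK.disjoint_reach.mono_right reach_subset⟩

lemma nSet_eq (hK : IsMinimalSeparator G X Y K) : NSet (PrGraph G X Y K) X = K := by
  ext v
  refine ⟨fun ⟨hvX, x, hx, hxv⟩ => ?_, fun hv => ?_⟩
  · by_contra hvK
    rcases hxv.2.2.2 with h | h | h
    · have hv : v ∈ Reach G Y K := by_contra fun hr => hxv.2.2.1 ⟨⟨hvK, hr⟩, hvX⟩
      have hxK : x ∉ K := fun hxK => hK.1.1 hxK (Or.inl hx)
      exact Set.disjoint_left.1 hK.1.disjoint_reach hx (mem_reach_of_adj hv h.symm hxK)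
    · exact hvK h.2
    · exact hvX h.2
  · have hvX : v ∉ X := fun h => hK.1.1 hv (Or.inl h)
    obtain ⟨x, hx⟩ := hK.nonempty_of_mem hv
    exact ⟨hvX, x, hx, adj_of_mem_of_mem hx hv hvX⟩

-- The vertices of `NR(G,Y,K) \ X` are isolated in `Pr(G,X,Y,K)`, so no walk from `X` meets them.
lemma isSeparator_diff_NR (hK' : IsSeparator (PrGraph G X Y K) X Y K') :
    IsSeparator (PrGraph G X Y K) X Y (K' \ NR G Y K) := by
  refine ⟨Set.sdiff_subset.trans hK'.1, fun x hx y hy w => ?_⟩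
  obtain ⟨z, hz, hzK'⟩ := hK'.2 x hx y hy w
  refine ⟨z, hz, hzK', fun hzN => ?_⟩
  have hzX : z ∉ X := fun hzX => hK'.1 hzK' (Or.inl hzX)
  have hxD : x ∉ NR G Y K \ X := fun hxD => hxD.2 hx
  exact w.notMem_of_isolated (fun _ _ (huv : (PrGraph G X Y K).Adj _ _) => huv.2.1) hxD z hz ⟨hzN, hzX⟩

lemma reach_subset_of_isSeparator (hK : IsMinimalSeparator G X Y K)
    (hK' : IsSeparator (PrGraph G X Y K) X Y K') : Reach G Y K' ⊆ Reach G Y K := by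
  suffices Reach G Y K' ⊆ Reach G Y K ∩ Reach (PrGraph G X Y K) Y K' from
    fun v hv => (this hv).1
  refine reach_subset_of_closed
    (fun y hy hyK' => ⟨mem_reach_self hy fun hyK => hK.1.1 hyK (Or.inr hy), mem_reach_self hy hyK'⟩)
    ?_
  rintro u v ⟨huG, huH⟩ huv hvK'
  have hvK : v ∉ K := by
    intro hvK
    obtain ⟨x, hx⟩ := hK.nonempty_of_mem hvK
    have hvX : v ∉ X := fun h => hK.1.1 hvK (Or.inl h)
    have hvH : v ∈ Reach (PrGraph G X Y K) Y K' :=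
      mem_reach_of_adj huH (adj_of_adj huv (notMem_diff_of_mem_reach huG) fun h => h.1.1 hvK) hvK'
    have hxH : x ∈ Reach (PrGraph G X Y K) Y K' :=
      mem_reach_of_adj hvH (adj_of_mem_of_mem hx hvK hvX).symm fun h => hK'.1 h (Or.inl hx)
    exact Set.disjoint_left.1 hK'.disjoint_reach hx hxH
  have hvG := mem_reach_of_adj huG huv hvK
  exact ⟨hvG, mem_reach_of_adj huH
    (adj_of_adj huv (notMem_diff_of_mem_reach huG) (notMem_diff_of_mem_reach hvG)) hvK'⟩

end PrGraph

theorem PrGraph_normalized_of_important_general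
    {V : Type*} [Fintype V] (G : SimpleGraph V) (X Y K : Set V)
    (hK : IsImportantSeparator G X Y K) :
    Normalized (PrGraph G X Y K) X Y := by
  obtain ⟨hmin, himp⟩ := hK
  rw [Normalized, PrGraph.nSet_eq hmin]
  refine ⟨PrGraph.isSeparator hmin.1, fun K' hK' hne => ?_⟩
  by_contra! hcard
  set K'' := K' \ NR G Y K
  have hK''H := PrGraph.isSeparator_diff_NR hK'
  have hreach : Reach G Y K'' ⊆ Reach G Y K := PrGraph.reach_subset_of_isSeparator hmin hK''H
  have hK''G : IsSeparator G X Y K'' :=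
    isSeparator_iff.2 ⟨hK''H.1, hmin.1.disjoint_reach.mono_right hreach⟩
  have hNR : NR G Y K = NR G Y K'' := by
    by_contra hne'
    exact himp ⟨K'', hK''G, ⟨sepLE_of_reach_subset Set.disjoint_sdiff_left hreach, hne'⟩,
      (Set.ncard_le_ncard Set.sdiff_subset).trans hcard⟩
  have hKK' : K ⊆ K' := (subset_of_NR_eq_of_reach_subset hNR hreach).trans Set.sdiff_subset
  exact hne (Set.eq_of_subset_of_ncard_le hKK' hcard).symm

/-- If `K` is an important `X`–`Y` separator of `G`, then the
graph `Pr(G,X,Y,K)` is `X`–`Y` normalized. -/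
theorem PrGraph_normalized_of_important
    {V : Type*} [Fintype V] (G : SimpleGraph V) (X Y K : Set V)
    (hXY : Disjoint X Y) (hK : IsImportantSeparator G X Y K) :
    Normalized (PrGraph G X Y K) X Y :=
  PrGraph_normalized_of_important_general G X Y K hK
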